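/- arXiv:1904.02893 — 3 statements merged into one kernel-verified Lean document; each statement's English description precedes it below -/
import Mathlib

section
/- Let A be a p×p real companion matrix with last row (a_p, a_{p-1}, ..., a_1) (i.e., A has ones on the superdiagonal, last row given by the coefficients, zeros elsewhere), and suppose the polynomial 1 - Σ_{k=1}^p a_k z^k has no complex root in the closed unit disk. Then Σ_{k≥0} e_p^T A^k e_p ≠ 0, where e_p is the p-th standard basis vector of ℝ^p. -/
/-- Companion matrix with ones on the superdiagonal and last row
`(a_p, a_{p-1}, ..., a_1)`, where `a k` stands for `a_{k+1}`. -/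
def companion (p : ℕ) (a : ℕ → ℝ) : Matrix (Fin p) (Fin p) ℝ :=
  fun i j => if i.val = p - 1 then a (p - 1 - j.val) else if j.val = i.val + 1 then 1 else 0

/-!
The characteristic polynomial of the companion matrix `A` is `χ(μ) = μ ^ p - ∑ a_k μ ^ (p-1-k)`,
the reversal of `1 - ∑ a_k z ^ (k+1)`, so the hypothesis puts the spectrum of `A` inside the open
unit disk and, by Gelfand's formula, the Neumann series `S = ∑ A ^ n` converges with
`(1 - A) S = 1`. Eigenvectors of `A` and the last column of `S` both solve
`A v = μ v - b e_p`; the shift structure of `A` forces `v_i = μ ^ i v_0`, and the last row then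
reads `v_0 χ(μ) = b`. For the last column (`μ = b = 1`) this gives `S_pp (1 - ∑ a_k) = 1`.
-/

open Finset Matrix
open scoped NNReal ENNReal

theorem summable_pow_of_spectralRadius_lt_one {A : Type*} [NormedRing A] [NormedAlgebra ℂ A]
    [CompleteSpace A] {a : A} (ha : spectralRadius ℂ a < 1) : Summable (a ^ ·) := by
  let P : FormalMultilinearSeries ℂ ℂ A := fun n =>
    ContinuousMultilinearMap.mkPiRing ℂ (Fin n) (a ^ n)
  have hnorm (n : ℕ) : ‖P n‖₊ = ‖a ^ n‖₊ :=
    NNReal.eq (ContinuousMultilinearMap.norm_mkPiRing _)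
  have hradius : P.radius⁻¹ = spectralRadius ℂ a := by
    rw [P.radius_inv_eq_limsup]
    refine ((spectrum.pow_nnnorm_pow_one_div_tendsto_nhds_spectralRadius a).congr
      fun n => ?_).limsup_eq
    rw [ENNReal.coe_rpow_of_nonneg _ (by positivity), hnorm]
  have hone : ((1 : ℝ≥0) : ℝ≥0∞) < P.radius := by
    rwa [ENNReal.coe_one, ← ENNReal.inv_lt_inv, inv_one, hradius]
  refine .of_norm ?_
  simpa [← coe_nnnorm, hnorm] using P.summable_norm_mul_pow hone

noncomputable def complexCompanion (p : ℕ) (a : ℕ → ℝ) : Matrix (Fin p) (Fin p) ℂ :=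
  (companion p a).map (↑)

theorem complexCompanion_pow (p : ℕ) (a : ℕ → ℝ) (k : ℕ) :
    complexCompanion p a ^ k = (companion p a ^ k).map (↑) :=
  ((companion p a).map_pow Complex.ofRealHom k).symm

noncomputable def companionCharpoly (n : ℕ) (a : ℕ → ℝ) (μ : ℂ) : ℂ :=
  μ ^ (n + 1) - ∑ k ∈ range (n + 1), (a k : ℂ) * μ ^ (n - k)

section

variable {n : ℕ} {a : ℕ → ℝ}

theorem companionCharpoly_eq_pow_mul {μ : ℂ} (hμ : μ ≠ 0) :
    companionCharpoly n a μ =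
      μ ^ (n + 1) * (1 - ∑ k ∈ range (n + 1), (a k : ℂ) * μ⁻¹ ^ (k + 1)) := by
  rw [companionCharpoly, mul_sub, mul_one, mul_sum]
  congr 1
  refine sum_congr rfl fun k hk => ?_
  rw [mem_range] at hk
  rw [inv_pow, mul_left_comm, ← pow_sub₀ _ hμ (by omega), show n + 1 - (k + 1) = n - k by omega]

theorem complexCompanion_mulVec_castSucc (v : Fin (n + 1) → ℂ) (i : Fin n) :
    (complexCompanion (n + 1) a *ᵥ v) i.castSucc = v i.succ := by
  have hi : (i : ℕ) ≠ n := i.isLt.ne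
  simp [Matrix.mulVec, dotProduct, complexCompanion, companion, hi, apply_ite, ← Fin.val_succ,
    Fin.val_inj]

theorem complexCompanion_mulVec_last (v : Fin (n + 1) → ℂ) :
    (complexCompanion (n + 1) a *ᵥ v) (Fin.last n) = ∑ j : Fin (n + 1), (a (n - j) : ℂ) * v j := by
  simp [Matrix.mulVec, dotProduct, complexCompanion, companion]

theorem apply_eq_pow_mul_of_complexCompanion_mulVec {v : Fin (n + 1) → ℂ} {μ b : ℂ}
    (hv : complexCompanion (n + 1) a *ᵥ v = μ • v - Pi.single (Fin.last n) b) (i : Fin (n + 1)) :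
    v i = μ ^ (i : ℕ) * v 0 := by
  induction i using Fin.induction with
  | zero => simp
  | succ i ih =>
    have hrow := congrFun hv i.castSucc
    rw [complexCompanion_mulVec_castSucc] at hrow
    simp [hrow, ih, pow_succ, mul_assoc, mul_left_comm, (Fin.castSucc_lt_last i).ne]

theorem mul_companionCharpoly_of_complexCompanion_mulVec {v : Fin (n + 1) → ℂ} {μ b : ℂ}
    (hv : complexCompanion (n + 1) a *ᵥ v = μ • v - Pi.single (Fin.last n) b) :
    v 0 * companionCharpoly n a μ = b := by
  calc v 0 * companionCharpoly n a μ
      = μ * (μ ^ n * v 0) - ∑ j : Fin (n + 1), (a (n - j) : ℂ) * (μ ^ (j : ℕ) * v 0) := by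
        rw [companionCharpoly, Fin.sum_univ_eq_sum_range (fun j => (a (n - j) : ℂ) * (μ ^ j * v 0)),
          ← sum_range_reflect, mul_sub, mul_sum]
        congr 1
        · ring
        refine sum_congr rfl fun j hj => ?_
        rw [mem_range] at hj
        rw [show n + 1 - 1 - j = n - j by omega, show n - (n - j) = j by omega]
        ring
    _ = μ * v (Fin.last n) - ∑ j : Fin (n + 1), (a (n - j) : ℂ) * v j := by
        simp only [apply_eq_pow_mul_of_complexCompanion_mulVec hv (Fin.last n), Fin.val_last,
          ← apply_eq_pow_mul_of_complexCompanion_mulVec hv]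
    _ = b := by
        rw [← complexCompanion_mulVec_last, hv]
        simp

theorem companionCharpoly_eq_zero_of_mem_spectrum {μ : ℂ}
    (hμ : μ ∈ spectrum ℂ (complexCompanion (n + 1) a)) : companionCharpoly n a μ = 0 := by
  rw [← Matrix.spectrum_toLin', ← Module.End.hasEigenvalue_iff_mem_spectrum] at hμ
  obtain ⟨v, hv, hv0⟩ := hμ.exists_hasEigenvector
  have hv' : complexCompanion (n + 1) a *ᵥ v = μ • v - Pi.single (Fin.last n) 0 := by
    simpa [Module.End.mem_eigenspace_iff] using hv
  have hv00 : v 0 ≠ 0 := fun h => hv0 <| funext fun i => by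
    rw [apply_eq_pow_mul_of_complexCompanion_mulVec hv' i, h, mul_zero, Pi.zero_apply]
  exact (mul_eq_zero.1 (mul_companionCharpoly_of_complexCompanion_mulVec hv')).resolve_left hv00

theorem norm_lt_one_of_mem_spectrum_complexCompanion
    (hS : ∀ z : ℂ, ‖z‖ ≤ 1 → 1 - ∑ k ∈ range (n + 1), (a k : ℂ) * z ^ (k + 1) ≠ 0) {μ : ℂ}
    (hμ : μ ∈ spectrum ℂ (complexCompanion (n + 1) a)) : ‖μ‖ < 1 := by
  by_contra! h1
  have hμ0 : μ ≠ 0 := norm_pos_iff.1 (one_pos.trans_le h1)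
  have hchar := companionCharpoly_eq_zero_of_mem_spectrum hμ
  rw [companionCharpoly_eq_pow_mul hμ0] at hchar
  exact hS μ⁻¹ (by rw [norm_inv]; exact inv_le_one_of_one_le₀ h1)
    ((mul_eq_zero.1 hchar).resolve_left (pow_ne_zero _ hμ0))

theorem last_last_mul_companionCharpoly_one {S : Matrix (Fin (n + 1)) (Fin (n + 1)) ℂ}
    (hinv : (1 - complexCompanion (n + 1) a) * S = 1) :
    S (Fin.last n) (Fin.last n) * companionCharpoly n a 1 = 1 := by
  have hMS : complexCompanion (n + 1) a * S = S - 1 := by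
    rw [← hinv, sub_mul, one_mul, sub_sub_cancel]
  have hv : complexCompanion (n + 1) a *ᵥ (S · (Fin.last n)) =
      (1 : ℂ) • (S · (Fin.last n)) - Pi.single (Fin.last n) 1 := by
    ext i
    simpa [Matrix.one_apply, Pi.single_apply, Matrix.mul_apply, Matrix.mulVec, dotProduct]
      using congrFun (congrFun hMS i) (Fin.last n)
  have hconst : S (Fin.last n) (Fin.last n) = S 0 (Fin.last n) := by
    simpa using apply_eq_pow_mul_of_complexCompanion_mulVec hv (Fin.last n)
  rw [hconst]
  exact mul_companionCharpoly_of_complexCompanion_mulVec hv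

end

-- Matrices carry no global norm; any submultiplicative one serves for Gelfand's formula.
attribute [local instance] Matrix.linftyOpNormedRing Matrix.linftyOpNormedAlgebra

theorem spectralRadius_complexCompanion_lt_one {n : ℕ} {a : ℕ → ℝ}
    (hS : ∀ z : ℂ, ‖z‖ ≤ 1 → 1 - ∑ k ∈ range (n + 1), (a k : ℂ) * z ^ (k + 1) ≠ 0) :
    spectralRadius ℂ (complexCompanion (n + 1) a) < 1 := by
  simpa using spectrum.spectralRadius_lt_of_forall_lt (complexCompanion (n + 1) a) (r := 1)
    fun μ hμ => by exact_mod_cast norm_lt_one_of_mem_spectrum_complexCompanion hS hμ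

/-- If `1 - Σ_{k=1}^p a_k z^k` has no complex root in the closed unit disk, then
`Σ_{k≥0} e_p^T A^k e_p ≠ 0` for the companion matrix `A`. -/
theorem stmt0 (p : ℕ) (hp : 0 < p) (a : ℕ → ℝ)
    (hS : ∀ z : ℂ, ‖z‖ ≤ 1 →
      (1 : ℂ) - ∑ k ∈ Finset.range p, (a k : ℂ) * z ^ (k + 1) ≠ 0) :
    (∑' n : ℕ, ((companion p a) ^ n) ⟨p - 1, by omega⟩ ⟨p - 1, by omega⟩) ≠ 0 := by
  obtain ⟨n, rfl⟩ := Nat.exists_eq_add_one_of_ne_zero hp.ne'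
  have hsum := summable_pow_of_spectralRadius_lt_one (spectralRadius_complexCompanion_lt_one hS)
  have hentry := (Pi.hasSum.1 (Pi.hasSum.1 hsum.hasSum (Fin.last n)) (Fin.last n)).tsum_eq
  have hdiag := last_last_mul_companionCharpoly_one hsum.one_sub_mul_tsum_pow
  rw [← hentry] at hdiag
  rw [← Complex.ofReal_ne_zero, Complex.ofReal_tsum]
  simpa [complexCompanion_pow, Fin.last] using left_ne_zero_of_mul_eq_one hdiag
end

section
/- Let (a_1,...,a_p) be such that the polynomial 1 - Σ_{k=1}^p a_k z^k has no zero in the closed unit disk. Then for every absolutely summable real sequence (y_t)_{t∈ℤ}, there is a unique absolutely summable real sequence (x_t)_{t∈ℤ} satisfying x_t = Σ_{k=1}^p a_k x_{t-k} + Σ_{k=1}^q b_k y_{t+1-k} for all t ∈ ℤ. -/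
/-!
Let `L` be the lag operator on `ℓ¹(ℤ, ℂ)`. Since `‖L‖ ≤ 1`, its spectrum lies in the closed unit
disk, so by the spectral mapping theorem `Φ(L) = 1 - Σ aₖ Lᵏ⁺¹` has no zero in its spectrum,
i.e. it is invertible. The recursion reads `Φ(L) x = Σ bₖ Lᵏ y`, which therefore has a unique
solution in `ℓ¹(ℤ, ℂ)`. The coefficients being real, the real part of this solution solves the
recursion, and any real solution, seen in `ℓ¹(ℤ, ℂ)`, must equal it.
-/

open scoped ENNReal
open Polynomial

theorem memℓp_one_iff_summable_norm {α : Type*} {E : α → Type*} [∀ i, NormedAddCommGroup (E i)]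
    {f : ∀ i, E i} : Memℓp f 1 ↔ Summable fun i => ‖f i‖ := by
  simp [memℓp_gen_iff (p := 1) (by norm_num)]

theorem lp.norm_eq_tsum_norm {α : Type*} {E : α → Type*} [∀ i, NormedAddCommGroup (E i)]
    (f : lp E 1) : ‖f‖ = ∑' i, ‖f i‖ := by
  simpa using lp.norm_eq_tsum_rpow (p := 1) (by norm_num) f

theorem isUnit_aeval_of_eval_ne_zero {A : Type*} [NormedRing A] [NormedAlgebra ℂ A]
    [CompleteSpace A] {a : A} {Q : ℂ[X]} (hQ : ∀ z ∈ spectrum ℂ a, Q.eval z ≠ 0) :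
    IsUnit (aeval a Q) := by
  nontriviality A
  by_contra h
  obtain ⟨z, hz, hQz⟩ := (spectrum.map_polynomial_aeval a Q ▸ (spectrum.zero_mem_iff ℂ).2 h)
  exact hQ z hz hQz

theorem Memℓp.comp_sub_one {E : Type*} [NormedAddCommGroup E] {f : ℤ → E} (hf : Memℓp f 1) :
    Memℓp (fun t => f (t - 1)) 1 :=
  memℓp_one_iff_summable_norm.2 <|
    (Equiv.subRight (1 : ℤ)).summable_iff.2 (memℓp_one_iff_summable_norm.1 hf)

section Lag

variable (𝕜 E : Type*) [NontriviallyNormedField 𝕜] [NormedAddCommGroup E] [NormedSpace 𝕜 E]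

noncomputable def lag : lp (fun _ : ℤ => E) 1 →L[𝕜] lp (fun _ : ℤ => E) 1 :=
  LinearMap.mkContinuous
    { toFun := fun f => ⟨fun t => f (t - 1), (lp.memℓp f).comp_sub_one⟩
      map_add' := fun _ _ => rfl
      map_smul' := fun _ _ => rfl } 1
    fun f => by
      rw [one_mul, lp.norm_eq_tsum_norm, lp.norm_eq_tsum_norm]
      exact ((Equiv.subRight (1 : ℤ)).tsum_eq fun t => ‖f t‖).le

theorem norm_lag_le : ‖lag 𝕜 E‖ ≤ 1 :=
  LinearMap.mkContinuous_norm_le _ zero_le_one _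

variable {𝕜 E}

theorem lag_pow_apply (n : ℕ) (f : lp (fun _ : ℤ => E) 1) (t : ℤ) :
    (lag 𝕜 E ^ n) f t = f (t - n) := by
  induction n generalizing t with
  | zero => simp
  | succ n ih =>
    rw [pow_succ']
    change (lag 𝕜 E ^ n) f (t - 1) = _
    rw [ih]
    push_cast
    ring_nf

theorem sum_smul_lag_pow_apply {ι : Type*} (s : Finset ι) (c : ι → 𝕜) (m : ι → ℕ)
    (f : lp (fun _ : ℤ => E) 1) (t : ℤ) :
    (∑ k ∈ s, c k • lag 𝕜 E ^ m k) f t = ∑ k ∈ s, c k • f (t - m k) := by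
  simp only [_root_.sum_apply, lp.coeFn_sum, Finset.sum_apply, _root_.smul_apply,
    lp.coeFn_smul, Pi.smul_apply, lag_pow_apply]

end Lag

theorem isUnit_one_sub_sum_smul_lag_pow (p : ℕ) (a : ℕ → ℂ)
    (hS : ∀ z : ℂ, ‖z‖ ≤ 1 → 1 - ∑ k ∈ Finset.range p, a k * z ^ (k + 1) ≠ 0) :
    IsUnit (1 - ∑ k ∈ Finset.range p, a k • lag ℂ ℂ ^ (k + 1)) := by
  have hQ : 1 - ∑ k ∈ Finset.range p, a k • lag ℂ ℂ ^ (k + 1) =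
      aeval (lag ℂ ℂ) (1 - ∑ k ∈ Finset.range p, C (a k) * X ^ (k + 1)) := by
    simp [map_sum, Algebra.smul_def]
  refine hQ ▸ isUnit_aeval_of_eval_ne_zero fun z hz => ?_
  have hz1 : ‖z‖ ≤ 1 := by
    have := spectrum.subset_closedBall_norm_mul (lag ℂ ℂ) hz
    rw [Metric.mem_closedBall, dist_zero_right] at this
    exact this.trans (mul_le_one₀ (norm_lag_le ℂ ℂ) (norm_nonneg _)
      ContinuousLinearMap.norm_id_le)
  simpa [eval_finsetSum] using hS z hz1

theorem existsUnique_lp_autoregressive_solution (p : ℕ) (a : ℕ → ℂ)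
    (hS : ∀ z : ℂ, ‖z‖ ≤ 1 → 1 - ∑ k ∈ Finset.range p, a k * z ^ (k + 1) ≠ 0)
    (g : lp (fun _ : ℤ => ℂ) 1) :
    ∃! x : lp (fun _ : ℤ => ℂ) 1,
      ∀ t, x t = ∑ k ∈ Finset.range p, a k * x (t - (k + 1)) + g t := by
  set A := 1 - ∑ k ∈ Finset.range p, a k • lag ℂ ℂ ^ (k + 1)
  have hAx : ∀ x, A x = g ↔ ∀ t, x t = ∑ k ∈ Finset.range p, a k * x (t - (k + 1)) + g t := by
    intro x
    simp only [lp.ext_iff, funext_iff, A, _root_.sub_apply, lp.coeFn_sub, Pi.sub_apply,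
      one_apply_eq_self, sum_smul_lag_pow_apply, smul_eq_mul]
    push_cast
    exact forall_congr' fun t => by rw [sub_eq_iff_eq_add']
  exact (existsUnique_congr hAx).1 <| (ContinuousLinearMap.isUnit_iff_bijective.1
    (isUnit_one_sub_sum_smul_lag_pow p a hS)).existsUnique g

theorem Memℓp.ofReal_of_summable_abs {x : ℤ → ℝ} (hx : Summable fun t => |x t|) :
    Memℓp (fun t => (x t : ℂ)) 1 :=
  memℓp_one_iff_summable_norm.2 (by simpa using hx)

/-- If `1 - Σ_{k=1}^p a_k z^k` has no zero in the closed unit disk, then for every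
absolutely summable real sequence `(y_t)` there is a unique absolutely summable
solution of `x_t = Σ_{k=1}^p a_k x_{t-k} + Σ_{k=1}^q b_k y_{t+1-k}`. -/
theorem stmt4 (p q : ℕ) (a b : ℕ → ℝ)
    (hS : ∀ z : ℂ, ‖z‖ ≤ 1 →
      (1 : ℂ) - ∑ k ∈ Finset.range p, (a k : ℂ) * z ^ (k + 1) ≠ 0)
    (y : ℤ → ℝ) (hy : Summable fun t : ℤ => |y t|) :
    ∃! x : ℤ → ℝ, (Summable fun t : ℤ => |x t|) ∧
      ∀ t : ℤ, x t = (∑ k ∈ Finset.range p, a k * x (t - (k + 1)))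
        + ∑ k ∈ Finset.range q, b k * y (t - k) := by
  set g : lp (fun _ : ℤ => ℂ) 1 := (∑ k ∈ Finset.range q, (b k : ℂ) • lag ℂ ℂ ^ k)
    ⟨fun t => (y t : ℂ), Memℓp.ofReal_of_summable_abs hy⟩
  have hg : ∀ t, g t = ∑ k ∈ Finset.range q, (b k : ℂ) * y (t - k) := fun t =>
    sum_smul_lag_pow_apply _ _ _ _ t
  obtain ⟨X, hX, hX_unique⟩ := existsUnique_lp_autoregressive_solution p (fun k => a k) hS g
  refine ⟨fun t => (X t).re, ⟨?_, fun t => ?_⟩, ?_⟩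
  · exact (memℓp_one_iff_summable_norm.1 X.2).of_nonneg_of_le (fun t => abs_nonneg _)
      fun t => Complex.abs_re_le_norm (X t)
  · simpa [hg] using congrArg Complex.re (hX t)
  · rintro x ⟨hx, hx_rec⟩
    have := hX_unique ⟨fun t => (x t : ℂ), Memℓp.ofReal_of_summable_abs hx⟩ fun t => by
      simp only [hg]
      exact_mod_cast hx_rec t
    funext t
    simpa using congrArg (fun x : lp (fun _ : ℤ => ℂ) 1 => (x t).re) this
end

section
/- Suppose (a*_1,...,a*_p) ∈ S_p and the polynomials P_p(z) = z^p - Σ_{k=1}^p a*_k z^{p-k} and Q_q(z) = Σ_{k=0}^{q-1} b*_{k+1} z^{q-1-k} have no common complex root. Let A and A* be the (p+q-1)-square block matrices built from coefficients (a_1,...,a_p, b_2,...,b_q) and (a*_1,...,a*_p, b*_2,...,b*_q) respectively (as in the ODM state-space form, with b_1 = b*_1), and b* = b*_1 e_p + e_{p+q-1}. If (a_1,...,a_p) ∈ S_p and e_p^T (A^k - A*^k) b* = 0 for all k ≥ 1, then A = A*. -/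
/-!
The outputs `e_pᵀ Aᵏ b̄` are the coefficients of the transfer series `H = Q / P`, where
`P = 1 - Σ aₖ Xᵏ` and `Q = Σ bₖ Xᵏ⁻¹`: the series `s = Σ Xᵏ Aᵏ b̄` is the solution of
`s = b̄ + X A s`, which is `X^(p-j) H` in the coordinates `j ≤ p` and a monomial in the
others. Equal outputs therefore give `Q_b P_{a*} = Q_{b*} P_a`. Reversing the polynomials
turns this into the same identity for the `P_p`, `Q_q` of the statement; as `P_p(·; a*)` is
monic of degree `p` and coprime to `Q_q(·; b*)`, it divides, hence equals, `P_p(·; a)`, and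
then `Q_q(·; b) = Q_q(·; b*)`.
-/

/-- The stability set `S_p`: coefficient vectors `(a_1,...,a_p)` (with `a k`
standing for `a_{k+1}`) such that `1 - Σ_{k=1}^p a_k z^k` has no root in the
closed unit disk. -/
def memSp (p : ℕ) (a : ℕ → ℝ) : Prop :=
  ∀ z : ℂ, ‖z‖ ≤ 1 →
    (1 : ℂ) - ∑ k ∈ Finset.range p, (a k : ℂ) * z ^ (k + 1) ≠ 0

/-- The `(p+q-1)`-square state-space matrix of the LODM: row `p` (1-indexed) is
`(a_p,...,a_1,b_q,...,b_2)`, rows `1..p-1` and `p+1..p+q-2` are shift rows, the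
last row is zero.  Here `a k` stands for `a_{k+1}` and `b k` for `b_{k+1}`. -/
def bigA (p q : ℕ) (a b : ℕ → ℝ) : Matrix (Fin (p + q - 1)) (Fin (p + q - 1)) ℝ :=
  fun i j =>
    if i.val = p - 1 then
      (if j.val < p then a (p - 1 - j.val) else b (q - 1 - (j.val - p)))
    else if j.val = i.val + 1 then 1 else 0

/-- The vector `b̄ = b_1 e_p + e_{p+q-1}` of the LODM state-space form (reducing
to `b_1 e_p` when `q = 1`). -/
def bbar (p q : ℕ) (b1 : ℝ) : Fin (p + q - 1) → ℝ :=
  fun i => if i.val = p - 1 then b1 else if i.val = p + q - 2 then 1 else 0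

/-- The vector `ω̄ = ω e_p` of the LODM state-space form. -/
def omegabar (p q : ℕ) (ω : ℝ) : Fin (p + q - 1) → ℝ :=
  fun i => if i.val = p - 1 then ω else 0

open Finset

section Polynomials

open Polynomial

theorem Polynomial.reflect_sum {R ι : Type*} [Semiring R] (s : Finset ι) (f : ι → R[X])
    (N : ℕ) :
    reflect N (∑ i ∈ s, f i) = ∑ i ∈ s, reflect N (f i) :=
  map_sum (⟨⟨reflect N, reflect_zero⟩, (reflect_add · · N)⟩ : R[X] →+ R[X]) f s

theorem Polynomial.eq_and_eq_of_mul_eq_mul_of_isCoprime {R : Type*} [CommRing R] [IsDomain R]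
    {f f' g g' : R[X]} (hf : f.Monic) (hf' : f'.Monic) (hdeg : f.natDegree ≤ f'.natDegree)
    (hcop : IsCoprime f' g') (h : g * f' = g' * f) : f = f' ∧ g = g' := by
  have hff' : f = f' := eq_of_monic_of_dvd_of_natDegree_le hf' hf
    (hcop.dvd_of_dvd_mul_left ⟨g, by rw [← h, mul_comm]⟩) hdeg
  subst hff'
  exact ⟨rfl, mul_right_cancel₀ hf.ne_zero h⟩

theorem Polynomial.reflect_injective {R : Type*} [Semiring R] (N : ℕ) :
    Function.Injective (reflect N : R[X] → R[X]) :=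
  fun f g h => by simpa using congrArg (reflect N) h

/- With `a m`, `b m` standing for `a_{m+1}`, `b_{m+1}`: `arPoly p a = 1 - Σ_{k=1}^p a_k Xᵏ` and
`maPoly q b = Σ_{k=1}^q b_k Xᵏ⁻¹`; the `P_p`, `Q_q` of the statement are their reflections
`reflect p (arPoly p a)` and `reflect (q - 1) (maPoly q b)`. -/
noncomputable def arPoly (p : ℕ) (a : ℕ → ℝ) : ℝ[X] :=
  1 - ∑ m ∈ range p, C (a m) * X ^ (m + 1)

noncomputable def maPoly (q : ℕ) (b : ℕ → ℝ) : ℝ[X] :=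
  ∑ m ∈ range q, C (b m) * X ^ m

section
variable {p q : ℕ} {a a' b b' : ℕ → ℝ}

theorem coeff_arPoly_zero : (arPoly p a).coeff 0 = 1 := by
  simp [arPoly]

theorem coeff_arPoly_succ {k : ℕ} (hk : k < p) : (arPoly p a).coeff (k + 1) = -a k := by
  simp [arPoly, coeff_one, hk]

theorem coeff_maPoly {k : ℕ} (hk : k < q) : (maPoly q b).coeff k = b k := by
  simp [maPoly, hk]

theorem natDegree_arPoly_le : (arPoly p a).natDegree ≤ p :=
  (natDegree_sub_le _ _).trans <| max_le (by simp) <| natDegree_sum_le_of_forall_le _ _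
    fun m hm => (natDegree_C_mul_X_pow_le _ _).trans (by simpa using hm)

theorem natDegree_maPoly_le : (maPoly q b).natDegree ≤ q - 1 :=
  natDegree_sum_le_of_forall_le _ _
    fun m hm => (natDegree_C_mul_X_pow_le _ _).trans (by simp at hm; omega)

theorem reflect_arPoly :
    reflect p (arPoly p a) = X ^ p - ∑ k ∈ range p, C (a k) * X ^ (p - 1 - k) := by
  rw [arPoly, reflect_sub, reflect_one, reflect_sum]
  refine congrArg _ (sum_congr rfl fun k hk => ?_)
  rw [reflect_C_mul_X_pow, revAt_le (by simpa using hk), Nat.sub_add_eq, Nat.sub_right_comm]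

theorem reflect_maPoly (hq : 0 < q) :
    reflect (q - 1) (maPoly q b) = ∑ k ∈ range q, C (b k) * X ^ (q - 1 - k) := by
  rw [maPoly, reflect_sum]
  refine sum_congr rfl fun k hk => ?_
  rw [reflect_C_mul_X_pow, revAt_le (by simp at hk; omega)]

theorem coeff_reflect_arPoly_self : (reflect p (arPoly p a)).coeff p = 1 := by
  rw [coeff_reflect, revAt_le le_rfl, Nat.sub_self, coeff_arPoly_zero]

theorem monic_reflect_arPoly : (reflect p (arPoly p a)).Monic :=
  monic_of_natDegree_le_of_coeff_eq_one p
    (natDegree_reflect_le.trans (max_le le_rfl natDegree_arPoly_le)) coeff_reflect_arPoly_self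

theorem natDegree_reflect_arPoly : (reflect p (arPoly p a)).natDegree = p :=
  le_antisymm (natDegree_reflect_le.trans (max_le le_rfl natDegree_arPoly_le))
    (le_natDegree_of_ne_zero (by rw [coeff_reflect_arPoly_self]; exact one_ne_zero))

theorem eq_of_arPoly_eq (h : arPoly p a = arPoly p a') {k : ℕ} (hk : k < p) : a k = a' k := by
  simpa [coeff_arPoly_succ hk] using congrArg (coeff · (k + 1)) h

theorem eq_of_maPoly_eq (h : maPoly q b = maPoly q b') {k : ℕ} (hk : k < q) : b k = b' k := by
  simpa [coeff_maPoly hk] using congrArg (coeff · k) h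

theorem isCoprime_reflect_arPoly_reflect_maPoly (hq : 0 < q)
    (h : ∀ z : ℂ, ¬ (z ^ p - ∑ k ∈ range p, (a k : ℂ) * z ^ (p - 1 - k) = 0 ∧
      ∑ k ∈ range q, (b k : ℂ) * z ^ (q - 1 - k) = 0)) :
    IsCoprime (reflect p (arPoly p a)) (reflect (q - 1) (maPoly q b)) := by
  refine (isCoprime_iff_aeval_ne_zero_of_isAlgClosed ℝ ℂ _ _).mpr fun z => ?_
  simpa [reflect_arPoly, reflect_maPoly hq] using not_and_or.mp (h z)

theorem eq_of_maPoly_mul_arPoly_eq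
    (hcop : IsCoprime (reflect p (arPoly p a')) (reflect (q - 1) (maPoly q b')))
    (h : maPoly q b * arPoly p a' = maPoly q b' * arPoly p a) :
    (∀ k < p, a k = a' k) ∧ ∀ k < q, b k = b' k := by
  have hrev : reflect (q - 1) (maPoly q b) * reflect p (arPoly p a') =
      reflect (q - 1) (maPoly q b') * reflect p (arPoly p a) := by
    rw [← reflect_mul _ _ natDegree_maPoly_le natDegree_arPoly_le,
      ← reflect_mul _ _ natDegree_maPoly_le natDegree_arPoly_le, h]
  obtain ⟨hP, hQ⟩ := eq_and_eq_of_mul_eq_mul_of_isCoprime monic_reflect_arPoly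
    monic_reflect_arPoly (by rw [natDegree_reflect_arPoly, natDegree_reflect_arPoly]) hcop hrev
  exact ⟨fun _ => eq_of_arPoly_eq (reflect_injective p hP),
    fun _ => eq_of_maPoly_eq (reflect_injective (q - 1) hQ)⟩

end

end Polynomials

section TransferSeries

open PowerSeries Matrix
open scoped Polynomial

@[norm_cast]
theorem Polynomial.coe_sum {R ι : Type*} [Semiring R] (s : Finset ι) (f : ι → R[X]) :
    ((∑ i ∈ s, f i : R[X]) : R⟦X⟧) = ∑ i ∈ s, (f i : R⟦X⟧) :=
  map_sum Polynomial.coeToPowerSeries.ringHom f s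

theorem coeff_eq_pow_mulVec_of_eq_C_add_X_mul {R n : Type*} [CommSemiring R] [Fintype n]
    [DecidableEq n] (M : Matrix n n R) (v : n → R) (s : n → R⟦X⟧)
    (hs : ∀ i, s i = C (v i) + X * ∑ j, C (M i j) * s j) (k : ℕ) :
    (fun i => coeff k (s i)) = (M ^ k) *ᵥ v := by
  induction k with
  | zero => ext i; rw [hs i]; simp
  | succ k ih =>
    ext i
    rw [pow_succ', ← Matrix.mulVec_mulVec, ← ih, hs i, map_add, coeff_succ_X_mul, coeff_C,
      if_neg k.succ_ne_zero, zero_add, map_sum]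
    simp [Matrix.mulVec, dotProduct]

noncomputable def transferSeries (p q : ℕ) (a b : ℕ → ℝ) : ℝ⟦X⟧ :=
  (maPoly q b : ℝ⟦X⟧) * (arPoly p a : ℝ⟦X⟧)⁻¹

section
variable {p q : ℕ} {a a' b b' : ℕ → ℝ}

theorem transferSeries_mul_arPoly : transferSeries p q a b * arPoly p a = maPoly q b := by
  rw [transferSeries, mul_assoc, PowerSeries.inv_mul_cancel _ (by simp [coeff_arPoly_zero]),
    mul_one]

theorem maPoly_mul_arPoly_eq_of_transferSeries_eq
    (h : transferSeries p q a b = transferSeries p q a' b') :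
    maPoly q b * arPoly p a' = maPoly q b' * arPoly p a := by
  apply Polynomial.coe_inj.mp
  rw [Polynomial.coe_mul, Polynomial.coe_mul, ← transferSeries_mul_arPoly, h,
    ← transferSeries_mul_arPoly (a := a'), mul_right_comm]

theorem coe_arPoly :
    (arPoly p a : ℝ⟦X⟧) = 1 - X * ∑ m ∈ range p, C (a m) * X ^ m := by
  push_cast [arPoly, mul_sum]
  exact congrArg _ (sum_congr rfl fun m _ => by ring)

theorem coe_maPoly (hq : 0 < q) :
    (maPoly q b : ℝ⟦X⟧) = C (b 0) + X * ∑ m ∈ range (q - 1), C (b (m + 1)) * X ^ m := by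
  obtain ⟨q, rfl⟩ := Nat.exists_eq_add_of_le' hq
  push_cast [maPoly, mul_sum]
  rw [sum_range_succ', add_comm]
  simp only [pow_zero, mul_one]
  exact congrArg _ (sum_congr rfl fun m _ => by ring)

theorem transferSeries_eq_C_add_X_mul (hq : 0 < q) :
    transferSeries p q a b = C (b 0) + X * ((∑ m ∈ range p, C (a m) * X ^ m) *
      transferSeries p q a b + ∑ m ∈ range (q - 1), C (b (m + 1)) * X ^ m) := by
  have h := transferSeries_mul_arPoly (p := p) (q := q) (a := a) (b := b)
  rw [coe_arPoly, coe_maPoly hq] at h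
  linear_combination h

end

-- Coordinate `j` (counted from `0`) of `Σ Xᵏ Aᵏ b̄`.
noncomputable def stateSeries (p q : ℕ) (a b : ℕ → ℝ) (j : ℕ) : ℝ⟦X⟧ :=
  if j < p then X ^ (p - 1 - j) * transferSeries p q a b else X ^ (p + q - 2 - j)

section
variable {p q : ℕ} {a b : ℕ → ℝ}

theorem sum_bigA_shiftRow {R : Type*} [Semiring R] (f : ℝ →+* R) (s : ℕ → R)
    {i : Fin (p + q - 1)} (hi : i.val ≠ p - 1) :
    ∑ j, f (bigA p q a b i j) * s j = if i.val + 1 < p + q - 1 then s (i.val + 1) else 0 := by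
  simp only [bigA, if_neg hi]
  rw [Fin.sum_univ_eq_sum_range (fun j => f (if j = i.val + 1 then 1 else 0) * s j)]
  simp [apply_ite f, ite_mul]

theorem sum_bigA_row {R : Type*} [Semiring R] (f : ℝ →+* R) (s : ℕ → R)
    {i : Fin (p + q - 1)} (hi : i.val = p - 1) :
    ∑ j, f (bigA p q a b i j) * s j =
      ∑ m ∈ range p, f (a m) * s (p - 1 - m) +
        ∑ m ∈ range (q - 1), f (b (m + 1)) * s (p + q - 2 - m) := by
  have hiq := i.isLt
  simp only [bigA, if_pos hi]
  rw [Fin.sum_univ_eq_sum_range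
      (fun j => f (if j < p then a (p - 1 - j) else b (q - 1 - (j - p))) * s j),
    show p + q - 1 = p + (q - 1) by omega, sum_range_add, ← sum_range_reflect _ p,
    ← sum_range_reflect _ (q - 1)]
  congr 1
  · refine sum_congr rfl fun m hm => ?_
    have hm : m < p := mem_range.mp hm
    rw [if_pos (by omega), show p - 1 - (p - 1 - m) = m by omega]
  · refine sum_congr rfl fun m hm => ?_
    have hm : m < q - 1 := mem_range.mp hm
    rw [if_neg (by omega), show q - 1 - (p + (q - 1 - 1 - m) - p) = m + 1 by omega,
      show p + (q - 1 - 1 - m) = p + q - 2 - m by omega]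

theorem stateSeries_eq_C_add_X_mul (hp : 0 < p) (hq : 0 < q) (i : Fin (p + q - 1)) :
    stateSeries p q a b i =
      C (bbar p q (b 0) i) + X * ∑ j, C (bigA p q a b i j) * stateSeries p q a b j := by
  by_cases hi : i.val = p - 1
  · have hAR : ∑ m ∈ range p, C (a m) * stateSeries p q a b (p - 1 - m) =
        (∑ m ∈ range p, C (a m) * X ^ m) * transferSeries p q a b := by
      rw [sum_mul]
      refine sum_congr rfl fun m hm => ?_
      have hm : m < p := mem_range.mp hm
      rw [stateSeries, if_pos (by omega), show p - 1 - (p - 1 - m) = m by omega, mul_assoc]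
    have hMA : ∑ m ∈ range (q - 1), C (b (m + 1)) * stateSeries p q a b (p + q - 2 - m) =
        ∑ m ∈ range (q - 1), C (b (m + 1)) * X ^ m := by
      refine sum_congr rfl fun m hm => ?_
      have hm : m < q - 1 := mem_range.mp hm
      rw [stateSeries, if_neg (by omega), show p + q - 2 - (p + q - 2 - m) = m by omega]
    rw [sum_bigA_row C _ hi, hAR, hMA, bbar, if_pos hi, hi, stateSeries, if_pos (by omega),
      Nat.sub_self, pow_zero, one_mul]
    exact transferSeries_eq_C_add_X_mul hq
  · rw [sum_bigA_shiftRow C _ hi]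
    simp only [bbar, if_neg hi, stateSeries]
    rcases Nat.lt_or_gt_of_ne hi with hlt | hgt
    · rw [if_pos (by omega), if_neg (by omega), if_pos (by omega), if_pos (by omega),
        show p - 1 - i = p - 1 - (i + 1) + 1 by omega, pow_succ', map_zero, zero_add, mul_assoc]
    · by_cases hlast : i.val = p + q - 2
      · rw [if_neg (by omega), if_pos hlast, if_neg (by omega), hlast, Nat.sub_self]
        simp
      · rw [if_neg (by omega), if_neg hlast, if_pos (by omega), if_neg (by omega),
          show p + q - 2 - i = p + q - 2 - (i + 1) + 1 by omega, pow_succ', map_zero, zero_add]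

theorem coeff_stateSeries (hp : 0 < p) (hq : 0 < q) (k : ℕ) (i : Fin (p + q - 1)) :
    coeff k (stateSeries p q a b i) = (bigA p q a b ^ k *ᵥ bbar p q (b 0)) i :=
  congrFun (coeff_eq_pow_mulVec_of_eq_C_add_X_mul _ _ _ (stateSeries_eq_C_add_X_mul hp hq) k) i

theorem coeff_transferSeries (hp : 0 < p) (hq : 0 < q) (k : ℕ) {i : Fin (p + q - 1)}
    (hi : i.val = p - 1) :
    coeff k (transferSeries p q a b) = (bigA p q a b ^ k *ᵥ bbar p q (b 0)) i := by
  simpa [stateSeries, hi, hp] using coeff_stateSeries hp hq k i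

end

end TransferSeries

theorem bigA_congr {p q : ℕ} {a a' b b' : ℕ → ℝ} (ha : ∀ k < p, a k = a' k)
    (hb : ∀ k < q, b k = b' k) : bigA p q a b = bigA p q a' b' := by
  ext i j
  simp only [bigA]
  split_ifs <;> first | rfl | (apply ha; omega) | (apply hb; omega)

/-- If `(a*_1,...,a*_p) ∈ S_p`, the polynomials `P_p(·;a*)` and `Q_q(·;b*)` have no
common complex root, `(a_1,...,a_p) ∈ S_p`, `b_1 = b*_1`, and
`e_p^T (A^k - A*^k) b* = 0` for all `k ≥ 1`, then `A = A*`. -/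
theorem stmt6 (p q : ℕ) (hp : 0 < p) (hq : 0 < q)
    (a astar b bstar : ℕ → ℝ) (hb1 : b 0 = bstar 0)
    (hcop : ∀ z : ℂ,
      ¬ ((z ^ p - ∑ k ∈ Finset.range p, (astar k : ℂ) * z ^ (p - 1 - k) = 0) ∧
         (∑ k ∈ Finset.range q, (bstar k : ℂ) * z ^ (q - 1 - k) = 0)))
    (hk : ∀ k : ℕ, 1 ≤ k →
      (((bigA p q a b) ^ k).mulVec (bbar p q (bstar 0))) ⟨p - 1, by omega⟩
        = (((bigA p q astar bstar) ^ k).mulVec (bbar p q (bstar 0))) ⟨p - 1, by omega⟩) :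
    bigA p q a b = bigA p q astar bstar := by
  have hH : transferSeries p q a b = transferSeries p q astar bstar := by
    ext k
    rw [coeff_transferSeries hp hq k (i := ⟨p - 1, by omega⟩) rfl,
      coeff_transferSeries hp hq k (i := ⟨p - 1, by omega⟩) rfl, hb1]
    rcases Nat.eq_zero_or_pos k with rfl | hk1
    · simp
    · exact hk k hk1
  obtain ⟨ha, hb⟩ := eq_of_maPoly_mul_arPoly_eq
    (isCoprime_reflect_arPoly_reflect_maPoly hq hcop)
    (maPoly_mul_arPoly_eq_of_transferSeries_eq hH)
  exact bigA_congr ha hb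
end
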